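/- Let a > 0, η > 0, c₁ ≥ 0 and 0 ≤ c₂ < a. Let f : [0, ∞) → [0, ∞) be continuous and suppose that f(t) ≤ c₁ e^{−η t} + c₂ ∫₀^t e^{−a(t−s)} f(s) ds for all t ≥ 0. Then there exist constants N > 0 and μ > 0 such that f(t) ≤ N e^{−μ t} for all t ≥ 0. -/

import Mathlib

lemma exp_conv_integral_le' (b t : ℝ) (hb : 0 < b) :
    ∫ s in (0:ℝ)..t, Real.exp (-b * (t - s)) ≤ 1 / b := by
  have hF : ∀ x ∈ Set.uIcc (0:ℝ) t, HasDerivAt (fun s => Real.exp (-b * (t - s)) / b)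
      (Real.exp (-b * (t - x))) x := by
    intro x _
    have h1 : HasDerivAt (fun s : ℝ => -b * (t - s)) b x := by
      have h := ((hasDerivAt_id x).const_sub t).const_mul (-b)
      simpa using h
    have h2 := (h1.exp).div_const b
    simpa [mul_div_assoc, mul_div_cancel_right₀, hb.ne'] using h2
  rw [intervalIntegral.integral_eq_sub_of_hasDerivAt hF (by
    apply Continuous.intervalIntegrable; continuity)]
  have h3 : 0 ≤ Real.exp (-b * (t - 0)) / b := by positivity
  simp only [sub_self, mul_zero, Real.exp_zero]
  linarith

/-- Delay-free analytic core of the exponential stability theorem: a nonnegative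
continuous function dominated by a decaying exponential plus an exponentially weighted
convolution of itself, with convolution coefficient `c₂ < a`, decays exponentially. -/
theorem exp_decay_of_convolution_bound
    (a η c₁ c₂ : ℝ) (ha : 0 < a) (hη : 0 < η) (hc₁ : 0 ≤ c₁)
    (hc₂0 : 0 ≤ c₂) (hc₂ : c₂ < a)
    (f : ℝ → ℝ)
    (hfcont : ContinuousOn f (Set.Ici 0))
    (hfnonneg : ∀ t ≥ (0 : ℝ), 0 ≤ f t)
    (hf : ∀ t ≥ (0 : ℝ),
      f t ≤ c₁ * Real.exp (-η * t) + c₂ * ∫ s in (0:ℝ)..t, Real.exp (-a * (t - s)) * f s) :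
    ∃ N > (0 : ℝ), ∃ μ > (0 : ℝ), ∀ t ≥ (0 : ℝ), f t ≤ N * Real.exp (-μ * t) := by
  set μ : ℝ := min η ((a - c₂) / 2) with hμdef
  have hμpos : 0 < μ := lt_min hη (by linarith)
  have hμη : μ ≤ η := min_le_left _ _
  have hμa : μ < a - c₂ := lt_of_le_of_lt (min_le_right _ _) (by linarith)
  set b : ℝ := a - μ with hbdef
  have hb : 0 < b := by simp only [hbdef]; linarith
  have hc₂b : c₂ < b := by simp only [hbdef]; linarith
  set q : ℝ := c₂ / b with hqdef
  have hq0 : 0 ≤ q := div_nonneg hc₂0 hb.le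
  have hq1 : q < 1 := (div_lt_one hb).2 hc₂b
  set C : ℝ := c₁ / (1 - q) with hCdef
  have hC0 : 0 ≤ C := div_nonneg hc₁ (by linarith)
  -- key claim
  have key : ∀ t ≥ (0:ℝ), Real.exp (μ * t) * f t ≤ C := by
    intro T hT
    set g : ℝ → ℝ := fun s => Real.exp (μ * s) * f s with hgdef
    have hgcont : ContinuousOn g (Set.Icc 0 T) :=
      (Real.continuous_exp.comp (continuous_const.mul continuous_id)).continuousOn.mul
        (hfcont.mono (fun x hx => hx.1))
    obtain ⟨t₀, ht₀mem, ht₀max⟩ :=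
      (isCompact_Icc : IsCompact (Set.Icc (0:ℝ) T)).exists_isMaxOn
        (Set.nonempty_Icc.2 hT) hgcont
    obtain ⟨ht₀0, ht₀T⟩ := ht₀mem
    -- bound the integrand
    have hptwise : ∀ s ∈ Set.Icc (0:ℝ) t₀,
        Real.exp (-a * (t₀ - s)) * f s ≤
          g t₀ * (Real.exp (-μ * t₀) * Real.exp (-b * (t₀ - s))) := by
      intro s hs
      have hgs : g s ≤ g t₀ := ht₀max ⟨hs.1, le_trans hs.2 ht₀T⟩
      have hfs : f s = Real.exp (-μ * s) * g s := by
        simp only [hgdef, ← mul_assoc, ← Real.exp_add]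
        simp
      have hexp : Real.exp (-a * (t₀ - s)) * Real.exp (-μ * s) =
          Real.exp (-μ * t₀) * Real.exp (-b * (t₀ - s)) := by
        rw [← Real.exp_add, ← Real.exp_add, hbdef]; ring_nf
      calc Real.exp (-a * (t₀ - s)) * f s
          = Real.exp (-a * (t₀ - s)) * Real.exp (-μ * s) * g s := by rw [hfs]; ring
        _ ≤ Real.exp (-a * (t₀ - s)) * Real.exp (-μ * s) * g t₀ := by
            apply mul_le_mul_of_nonneg_left hgs (by positivity)
        _ = g t₀ * (Real.exp (-μ * t₀) * Real.exp (-b * (t₀ - s))) := by rw [hexp]; ring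
    have hg0 : 0 ≤ g t₀ := mul_nonneg (Real.exp_pos _).le (hfnonneg _ ht₀0)
    -- integrability
    have hint1 : IntervalIntegrable (fun s => Real.exp (-a * (t₀ - s)) * f s)
        MeasureTheory.volume 0 t₀ := by
      apply ContinuousOn.intervalIntegrable
      rw [Set.uIcc_of_le ht₀0]
      exact ((Real.continuous_exp.comp
        (continuous_const.mul (continuous_const.sub continuous_id))).continuousOn).mul
        (hfcont.mono (fun x hx => hx.1))
    have hint2 : IntervalIntegrable
        (fun s => g t₀ * (Real.exp (-μ * t₀) * Real.exp (-b * (t₀ - s))))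
        MeasureTheory.volume 0 t₀ := by
      apply Continuous.intervalIntegrable
      exact continuous_const.mul (continuous_const.mul (Real.continuous_exp.comp
        (continuous_const.mul (continuous_const.sub continuous_id))))
    have hIle : (∫ s in (0:ℝ)..t₀, Real.exp (-a * (t₀ - s)) * f s) ≤
        g t₀ * Real.exp (-μ * t₀) * (1 / b) := by
      calc (∫ s in (0:ℝ)..t₀, Real.exp (-a * (t₀ - s)) * f s)
          ≤ ∫ s in (0:ℝ)..t₀, g t₀ * (Real.exp (-μ * t₀) * Real.exp (-b * (t₀ - s))) :=
            intervalIntegral.integral_mono_on ht₀0 hint1 hint2 hptwise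
        _ = g t₀ * Real.exp (-μ * t₀) * ∫ s in (0:ℝ)..t₀, Real.exp (-b * (t₀ - s)) := by
            rw [← intervalIntegral.integral_const_mul]
            congr 1; ext s; ring
        _ ≤ g t₀ * Real.exp (-μ * t₀) * (1 / b) := by
            apply mul_le_mul_of_nonneg_left (exp_conv_integral_le' b t₀ hb) (by positivity)
    have hft₀ := hf t₀ ht₀0
    -- combine: g t₀ ≤ c₁ * exp((μ-η)t₀) + q * g t₀
    have hgt₀ : g t₀ ≤ c₁ + q * g t₀ := by
      have h1 : f t₀ ≤ c₁ * Real.exp (-η * t₀) + c₂ * (g t₀ * Real.exp (-μ * t₀) * (1 / b)) :=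
        le_trans hft₀ (by
          have := mul_le_mul_of_nonneg_left hIle hc₂0
          linarith)
      have h2 := mul_le_mul_of_nonneg_left h1 (Real.exp_pos (μ * t₀)).le
      have he1 : Real.exp (μ * t₀) * f t₀ = g t₀ := rfl
      have he2 : Real.exp (μ * t₀) * Real.exp (-μ * t₀) = 1 := by
        rw [← Real.exp_add]; simp
      have he3 : Real.exp (μ * t₀) * Real.exp (-η * t₀) ≤ 1 := by
        rw [← Real.exp_add]
        apply Real.exp_le_one_iff.2
        nlinarith
      have hqe : c₂ * (1 / b) = q := by rw [hqdef]; field_simp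
      calc g t₀ = Real.exp (μ * t₀) * f t₀ := rfl
        _ ≤ Real.exp (μ * t₀) * (c₁ * Real.exp (-η * t₀)
              + c₂ * (g t₀ * Real.exp (-μ * t₀) * (1 / b))) := h2
        _ = c₁ * (Real.exp (μ * t₀) * Real.exp (-η * t₀))
              + (c₂ * (1 / b)) * g t₀ * (Real.exp (μ * t₀) * Real.exp (-μ * t₀)) := by ring
        _ ≤ c₁ * 1 + q * g t₀ * 1 := by
            rw [hqe, he2]
            have := mul_le_mul_of_nonneg_left he3 hc₁
            nlinarith
        _ = c₁ + q * g t₀ := by ring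
    have : g t₀ ≤ C := by
      rw [hCdef, le_div_iff₀ (by linarith : (0:ℝ) < 1 - q)]
      nlinarith
    have hgT : g T ≤ g t₀ := ht₀max ⟨hT, le_refl T⟩
    exact le_trans hgT this
  -- conclude
  refine ⟨C + 1, by linarith, μ, hμpos, fun t ht => ?_⟩
  have hep := Real.exp_pos (μ * t)
  have h1 : f t ≤ C * Real.exp (-μ * t) := by
    rw [neg_mul, Real.exp_neg, mul_comm C, inv_mul_eq_div, le_div_iff₀ hep]
    have := key t ht
    linarith [mul_comm (f t) (Real.exp (μ * t))]
  have h2 : C * Real.exp (-μ * t) ≤ (C + 1) * Real.exp (-μ * t) :=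
    mul_le_mul_of_nonneg_right (by linarith) (Real.exp_pos _).le
  linarith
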